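/- Let k be a field, let K be a finite field extension of k of degree ℓ^r for a prime number ℓ and a natural number r, and let a ∈ K be an element with K = k[a] (the k-subalgebra generated by a is all of K). Let m be a natural number with m ≤ ℓ^r − 1, let L be a finite field extension of k, and suppose x : Fin (m+1) → L is a nonzero tuple such that the norm from L ⊗_k K down to L of the element ∑_{i=0}^{m} x_i ⊗ a^i is zero. Then ℓ divides the degree [L : k]. -/

import Mathlib

/-!
Write `z = ∑ xᵢ ⊗ aⁱ ∈ L ⊗[k] K`. Since `1, a, …, a^m` is part of a power basis of `K`, `z ≠ 0`;
since its norm vanishes, `z` is not a unit. A maximal ideal `𝔪 ∋ z` gives a field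
`M = (L ⊗[k] K) ⧸ 𝔪` containing both `L` and `K`, with `[M : L] < [L ⊗[k] K : L] = ℓ ^ r` because
`𝔪 ≠ 0`. Then `ℓ ^ r = [K : k]` divides `[M : k] = [L : k] [M : L]` with `0 < [M : L] < ℓ ^ r`,
which forces `ℓ ∣ [L : k]`.
-/

open scoped TensorProduct
open Module

theorem Nat.Prime.dvd_of_pow_dvd_mul_of_lt {ℓ r d e : ℕ} (hℓ : ℓ.Prime) (h : ℓ ^ r ∣ d * e)
    (he0 : 0 < e) (he : e < ℓ ^ r) : ℓ ∣ d := by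
  by_contra hd
  have hcop : Nat.Coprime (ℓ ^ r) d := ((hℓ.coprime_iff_not_dvd).mpr hd).pow_left r
  exact (Nat.le_of_dvd he0 (hcop.dvd_of_dvd_mul_left h)).not_gt he

theorem PowerBasis.linearIndependent_one_tmul_gen_pow {k K L : Type*} [CommRing k] [Ring K]
    [Algebra k K] [CommRing L] [Algebra k L] (pb : PowerBasis k K) {n : ℕ} (hn : n ≤ pb.dim) :
    LinearIndependent L (fun i : Fin n ↦ (1 : L) ⊗ₜ[k] pb.gen ^ (i : ℕ)) := by
  convert (Algebra.TensorProduct.basis L pb.basis).linearIndependent.comp _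
    (Fin.castLE_injective hn) with i
  simp [Algebra.TensorProduct.basis_apply, pb.basis_eq_pow]

theorem Ideal.finrank_quotient_lt {L A : Type*} [Field L] [CommRing A] [Algebra L A]
    [FiniteDimensional L A] {I : Ideal A} (hI : I ≠ ⊥) :
    finrank L (A ⧸ I) < finrank L A := by
  have hpos : 0 < finrank L (I.restrictScalars L) :=
    Nat.pos_of_ne_zero (by simpa [Submodule.finrank_eq_zero] using hI)
  exact (Nat.lt_add_of_pos_right hpos).trans_eq (I.restrictScalars L).finrank_quotient_add_finrank

theorem AlgHom.finrank_dvd_finrank {k K M : Type*} [Field k] [Field K] [CommRing M]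
    [Algebra k K] [Algebra k M] (φ : K →ₐ[k] M) : finrank k K ∣ finrank k M := by
  let : Algebra K M := φ.toRingHom.toAlgebra
  have : IsScalarTower k K M := .of_algebraMap_eq fun c ↦ (φ.commutes c).symm
  exact Module.finrank_dvd_finrank_right k K M

theorem prime_dvd_finrank_of_norm_form_zero_general
    (k : Type*) [Field k] (K : Type*) [Field K] [Algebra k K] [FiniteDimensional k K]
    (ℓ r : ℕ) (hℓ : ℓ.Prime) (hK : Module.finrank k K = ℓ ^ r)
    (a : K) (ha : Algebra.adjoin k ({a} : Set K) = ⊤)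
    (m : ℕ) (hm : m ≤ ℓ ^ r - 1)
    (L : Type*) [Field L] [Algebra k L]
    (x : Fin (m + 1) → L) (hx : x ≠ 0)
    (hnorm : Algebra.norm L (∑ i : Fin (m + 1), x i ⊗ₜ[k] (a ^ (i : ℕ)) : L ⊗[k] K) = 0) :
    ℓ ∣ Module.finrank k L := by
  let pb := PowerBasis.ofAdjoinEqTop (.of_finite k a) ha
  have hgen : pb.gen = a := PowerBasis.ofAdjoinEqTop_gen ..
  have hdim : pb.dim = ℓ ^ r := by rw [← hK, pb.finrank]
  set z : L ⊗[k] K := ∑ i : Fin (m + 1), x i ⊗ₜ[k] (a ^ (i : ℕ))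
  have hz0 : z ≠ 0 := by
    have hli := pb.linearIndependent_one_tmul_gen_pow (L := L) (n := m + 1)
      (by have := Nat.one_le_pow r ℓ hℓ.pos; omega)
    refine fun hz ↦ hx (funext fun i ↦ Fintype.linearIndependent_iff.mp hli x ?_ i)
    simpa [z, hgen, TensorProduct.smul_tmul'] using hz
  have hz_unit : ¬IsUnit z := fun h ↦ not_isUnit_zero (hnorm ▸ h.map (Algebra.norm L))
  obtain ⟨𝔪, h𝔪, hz𝔪⟩ := (Ideal.span {z}).exists_le_maximal
    (by rwa [Ne, Ideal.span_singleton_eq_top])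
  let := Ideal.Quotient.field 𝔪
  have hlt : finrank L (L ⊗[k] K ⧸ 𝔪) < ℓ ^ r := by
    rw [← hK, ← Module.finrank_baseChange (R := L) (S := k)]
    exact Ideal.finrank_quotient_lt (ne_bot_of_le_ne_bot (by simpa using hz0) hz𝔪)
  have hdvd : ℓ ^ r ∣ finrank k L * finrank L (L ⊗[k] K ⧸ 𝔪) := by
    rw [Module.finrank_mul_finrank, ← hK]
    exact ((Ideal.Quotient.mkₐ k 𝔪).comp Algebra.TensorProduct.includeRight).finrank_dvd_finrank
  exact hℓ.dvd_of_pow_dvd_mul_of_lt hdvd Module.finrank_pos hlt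

/-- If `K = k[a]` has degree `ℓ^r` over `k` for a prime `ℓ`, `m ≤ ℓ^r - 1`, and a finite
extension `L` of `k` carries a nontrivial zero `x` of the norm form
`N(x₀ + x₁ a + ⋯ + x_m a^m)`, then `ℓ` divides `[L : k]`. -/
theorem prime_dvd_finrank_of_norm_form_zero
    (k : Type*) [Field k] (K : Type*) [Field K] [Algebra k K] [FiniteDimensional k K]
    (ℓ r : ℕ) (hℓ : ℓ.Prime) (hK : Module.finrank k K = ℓ ^ r)
    (a : K) (ha : Algebra.adjoin k ({a} : Set K) = ⊤)
    (m : ℕ) (hm : m ≤ ℓ ^ r - 1)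
    (L : Type*) [Field L] [Algebra k L] [FiniteDimensional k L]
    (x : Fin (m + 1) → L) (hx : x ≠ 0)
    (hnorm : Algebra.norm L (∑ i : Fin (m + 1), x i ⊗ₜ[k] (a ^ (i : ℕ)) : L ⊗[k] K) = 0) :
    ℓ ∣ Module.finrank k L :=
  prime_dvd_finrank_of_norm_form_zero_general k K ℓ r hℓ hK a ha m hm L x hx hnorm
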